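/- arXiv:2003.11929 — 3 statements merged into one kernel-verified Lean document; each statement's English description precedes it below -/
import Mathlib

section
/- Let X be a compact metric space and F ∪ P a finite family of continuous self-maps on X with X = ⋃_{f∈F∪P} f(X). If F is a topologically contracting system on X and for every f ∈ F ∪ P and every p ∈ P the set f(p(X)) is a singleton, then P is also a topologically contracting system on X (and consequently (X, F ∪ P) is a topological fractal). -/
/-!
If `f ∘ p` is constant for every `f ∈ F ∪ P` and `p ∈ P`, then every composition of maps from
`F ∪ P` in which a map of `P` occurs after the first position is constant; in particular
all two-fold compositions from `P` are constant, so `P` is contracting. A composition of length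
`N + 1` from `F ∪ P` is therefore either constant or of the form `g ∘ Comp t` with `t` a list
from `F` of length `N`. For the latter, contract `F` against the pulled-back open cover
`g⁻¹' 𝒰`; finiteness of `F ∪ P` makes one `N` work for all `g`.
-/

open Set

/-- Composition of a list of self-maps. -/
def Comp {X : Type*} (l : List (X → X)) : X → X := l.foldr (· ∘ ·) id

/-- `F` is a topologically contracting system on `Y ⊆ X`. -/
def TopContracting {X : Type*} [TopologicalSpace X] (F : Set (X → X)) (Y : Set X) : Prop :=
  ∀ 𝒰 : Set (Set X), (∀ U ∈ 𝒰, IsOpen U) → Y ⊆ ⋃₀ 𝒰 →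
    ∃ n : ℕ, ∀ l : List (X → X), l.length = n → (∀ f ∈ l, f ∈ F) →
      ∃ U ∈ 𝒰, Comp l '' Y ⊆ U

/-- `(X, F)` is a topological fractal (whole-space version). -/
def TopFractal {X : Type*} [TopologicalSpace X] (F : Set (X → X)) : Prop :=
  F.Finite ∧ (∀ f ∈ F, Continuous f) ∧ (⋃ f ∈ F, Set.range f) = Set.univ ∧
    TopContracting F Set.univ

open Filter

section

variable {X : Type*}

@[simp]
lemma Comp_cons (f : X → X) (l : List (X → X)) : Comp (f :: l) = f ∘ Comp l := rfl

lemma Comp_append (l₁ l₂ : List (X → X)) : Comp (l₁ ++ l₂) = Comp l₁ ∘ Comp l₂ := by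
  induction l₁ with
  | nil => rfl
  | cons f t ih => simp only [List.cons_append, Comp_cons, ih]; rfl

lemma range_Comp_subset_range_Comp_take (l : List (X → X)) (k : ℕ) :
    range (Comp l) ⊆ range (Comp (l.take k)) := by
  conv_lhs => rw [← List.take_append_drop k l, Comp_append]
  exact range_comp_subset_range _ _

lemma exists_Comp_eq_of_mem_tail {G P : Set (X → X)}
    (hsing : ∀ f ∈ G, ∀ p ∈ P, ∃ x : X, f '' range p = {x}) {b : X → X} (hb : b ∈ P) :
    ∀ {g : X → X} {t : List (X → X)}, g ∈ G → (∀ f ∈ t, f ∈ G) → b ∈ t →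
      ∃ x, ∀ y, Comp (g :: t) y = x
  | _, [], _, _, hbt => absurd hbt List.not_mem_nil
  | g, c :: t, hg, ht, hbt => by
    rcases List.mem_cons.1 hbt with rfl | hbt
    · obtain ⟨x, hx⟩ := hsing g hg b hb
      refine ⟨x, fun y => ?_⟩
      rw [← mem_singleton_iff, ← hx]
      exact mem_image_of_mem g (mem_range_self _)
    · obtain ⟨x, hx⟩ := exists_Comp_eq_of_mem_tail hsing hb (ht c List.mem_cons_self)
        (fun f hf => ht f (List.mem_cons_of_mem c hf)) hbt
      exact ⟨g x, fun y => congrArg g (hx y)⟩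

lemma exists_mem_image_subset_of_forall_eq {α : Type*} {𝒰 : Set (Set X)}
    (hcov : univ ⊆ ⋃₀ 𝒰) {φ : α → X} {x : X} (hφ : ∀ y, φ y = x) (s : Set α) :
    ∃ U ∈ 𝒰, φ '' s ⊆ U := by
  obtain ⟨U, hU, hxU⟩ := hcov (mem_univ x)
  refine ⟨U, hU, ?_⟩
  rintro _ ⟨y, -, rfl⟩
  rwa [hφ]

lemma topContracting_of_image_range_eq_singleton {P : Set (X → X)} [TopologicalSpace X]
    (hsing : ∀ f ∈ P, ∀ p ∈ P, ∃ x : X, f '' range p = {x}) : TopContracting P univ := by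
  intro 𝒰 _ hcov
  refine ⟨2, fun l hlen hP => ?_⟩
  obtain ⟨p, q, rfl⟩ := List.length_eq_two.1 hlen
  have hq : q ∈ P := hP q (by simp)
  obtain ⟨x, hx⟩ := exists_Comp_eq_of_mem_tail hsing hq (hP p (by simp))
    (fun f hf => hP f (List.mem_cons_of_mem p hf)) (List.mem_singleton_self q)
  exact exists_mem_image_subset_of_forall_eq hcov hx univ

namespace TopContracting

variable [TopologicalSpace X] {F : Set (X → X)}

lemma eventually_range_Comp_subset_preimage (hF : TopContracting F univ) {g : X → X}
    (hg : Continuous g) {𝒰 : Set (Set X)} (hopen : ∀ U ∈ 𝒰, IsOpen U)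
    (hcov : univ ⊆ ⋃₀ 𝒰) :
    ∀ᶠ n in atTop, ∀ l : List (X → X), l.length = n → (∀ f ∈ l, f ∈ F) →
      ∃ U ∈ 𝒰, range (Comp l) ⊆ g ⁻¹' U := by
  have hopen' : ∀ V ∈ preimage g '' 𝒰, IsOpen V := by
    rintro _ ⟨U, hU, rfl⟩
    exact (hopen U hU).preimage hg
  have hcov' : univ ⊆ ⋃₀ (preimage g '' 𝒰) := fun x _ => by
    obtain ⟨U, hU, hgx⟩ := hcov (mem_univ (g x))
    exact ⟨g ⁻¹' U, mem_image_of_mem _ hU, hgx⟩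
  obtain ⟨n, hn⟩ := hF _ hopen' hcov'
  refine eventually_atTop.2 ⟨n, fun m hm l hl hlF => ?_⟩
  obtain ⟨_, ⟨U, hU, rfl⟩, hsub⟩ := hn (l.take n) (by simp [hl, hm])
    (fun f hf => hlF f (List.mem_of_mem_take hf))
  rw [image_univ] at hsub
  exact ⟨U, hU, (range_Comp_subset_range_Comp_take l n).trans hsub⟩

theorem union {P : Set (X → X)} (hF : TopContracting F univ) (hfin : (F ∪ P).Finite)
    (hcont : ∀ f ∈ F ∪ P, Continuous f)
    (hsing : ∀ f ∈ F ∪ P, ∀ p ∈ P, ∃ x : X, f '' range p = {x}) :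
    TopContracting (F ∪ P) univ := by
  intro 𝒰 hopen hcov
  obtain ⟨N, hN⟩ := ((eventually_all_finite hfin).2 fun g hg =>
    hF.eventually_range_Comp_subset_preimage (hcont g hg) hopen hcov).exists
  refine ⟨N + 1, ?_⟩
  rintro (_ | ⟨g, t⟩) hlen hmem
  · simp at hlen
  have hg : g ∈ F ∪ P := hmem g List.mem_cons_self
  have ht : ∀ f ∈ t, f ∈ F ∪ P := fun f hf => hmem f (List.mem_cons_of_mem g hf)
  by_cases hP : ∃ b ∈ t, b ∈ P
  · obtain ⟨b, hbt, hbP⟩ := hP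
    obtain ⟨x, hx⟩ := exists_Comp_eq_of_mem_tail hsing hbP hg ht hbt
    exact exists_mem_image_subset_of_forall_eq hcov hx univ
  · push Not at hP
    obtain ⟨U, hU, hsub⟩ := hN g hg t (by simpa using hlen)
      (fun f hf => (ht f hf).resolve_right (hP f hf))
    refine ⟨U, hU, ?_⟩
    rw [image_univ, Comp_cons, range_comp]
    exact image_subset_iff.2 hsub

end TopContracting

end

theorem stmt5_general {X : Type*} [MetricSpace X] (F P : Set (X → X))
    (hfin : (F ∪ P).Finite) (hcont : ∀ f ∈ F ∪ P, Continuous f)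
    (hcover : (⋃ f ∈ F ∪ P, Set.range f) = Set.univ)
    (hFc : TopContracting F Set.univ)
    (hsing : ∀ f ∈ F ∪ P, ∀ p ∈ P, ∃ x : X, f '' Set.range p = {x}) :
    TopContracting P Set.univ ∧ TopFractal (F ∪ P) :=
  ⟨topContracting_of_image_range_eq_singleton fun f hf => hsing f (Or.inr hf),
    hfin, hcont, hcover, hFc.union hfin hcont hsing⟩

theorem stmt5 {X : Type*} [MetricSpace X] [CompactSpace X] (F P : Set (X → X))
    (hfin : (F ∪ P).Finite) (hcont : ∀ f ∈ F ∪ P, Continuous f)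
    (hcover : (⋃ f ∈ F ∪ P, Set.range f) = Set.univ)
    (hFc : TopContracting F Set.univ)
    (hsing : ∀ f ∈ F ∪ P, ∀ p ∈ P, ∃ x : X, f '' Set.range p = {x}) :
    TopContracting P Set.univ ∧ TopFractal (F ∪ P) :=
  stmt5_general F P hfin hcont hcover hFc hsing
end

section
/- Let X be a Peano continuum, (A, F) a topological fractal with A ⊆ X, and U ⊊ A a nonempty open set such that (i) all maps in F are constant on A \ U, and (ii) there exist Peano continua P₁,…,Pₙ with X \ A ⊆ ⋃ᵢ Pᵢ ⊆ X \ U. Then X is the underlying space of some topological fractal. -/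
open Set

/-- `(Y, F)` is a topological fractal, where `Y` is a compact subset of an ambient space. -/
def TopFractalOn {X : Type*} [TopologicalSpace X] (F : Set (X → X)) (Y : Set X) : Prop :=
  IsCompact Y ∧ F.Finite ∧ (∀ f ∈ F, ContinuousOn f Y ∧ f '' Y ⊆ Y) ∧
    (⋃ f ∈ F, f '' Y) = Y ∧ TopContracting F Y

/-- `S` is a Peano continuum as a subspace. -/
def IsPeanoOn {X : Type*} [TopologicalSpace X] (S : Set X) : Prop :=
  IsCompact S ∧ IsConnected S ∧ LocallyConnectedSpace S

/-!
Extend each `f ∈ F` to `X` by its constant value off `U`, and add, for each Peano continuum `Pᵢ`,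
a map `X → Pᵢ` that first collapses `X \ U` to `0 ∈ [0, 1]` (Urysohn) and then follows a
Hahn–Mazurkiewicz surjection `[0, 1] → Pᵢ`. Every map of the new system is constant on `X \ U`
and the new maps send `X` into `X \ U`, so a word in which a new map occurs after the first letter
is constant. In the remaining words all letters but the first are extensions of maps of `F`, which
act on `A` as words of `F` do; so these words inherit the contractivity of `(A, F)`.

The Hahn–Mazurkiewicz surjection is the limit of ever finer and denser `ε`-chains, each obtained
from the previous one by replacing every step with a finer chain inside a small ball, which exists
by the uniform local connectedness of a Peano continuum.
-/

open Filter Topology Metric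

section EpsChain

variable {Q : Type*} [PseudoMetricSpace Q]

/-- An `η`-chain from `a` to `b` in `S`, written as a sequence that is stationary at `b` from
step `k` on. -/
structure IsEpsChain (η : ℝ) (S : Set Q) (a b : Q) (k : ℕ) (c : ℕ → Q) : Prop where
  zero : c 0 = a
  eq_of_le : ∀ i, k ≤ i → c i = b
  dist_succ_lt : ∀ i, dist (c i) (c (i + 1)) < η
  mem : ∀ i, c i ∈ S

namespace IsEpsChain

variable {η : ℝ} {S T : Set Q} {a b d : Q} {k k₁ k₂ : ℕ} {c c₁ c₂ : ℕ → Q}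

lemma const (hη : 0 < η) (ha : a ∈ S) : IsEpsChain η S a a 0 fun _ ↦ a :=
  ⟨rfl, fun _ _ ↦ rfl, fun _ ↦ by simpa, fun _ ↦ ha⟩

lemma pair (ha : a ∈ S) (hb : b ∈ S) (hab : dist a b < η) :
    IsEpsChain η S a b 1 fun i ↦ if i = 0 then a else b where
  zero := rfl
  eq_of_le i hi := if_neg (by omega)
  dist_succ_lt i := by
    rcases Nat.eq_zero_or_pos i with rfl | hi
    · simpa using hab
    · simpa [hi.ne'] using dist_nonneg.trans_lt hab
  mem i := by split_ifs <;> assumption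

lemma mono (h : IsEpsChain η S a b k c) (hST : S ⊆ T) : IsEpsChain η T a b k c :=
  ⟨h.zero, h.eq_of_le, h.dist_succ_lt, fun i ↦ hST (h.mem i)⟩

lemma exists_le_eq_of_mem_range (h : IsEpsChain η S a b k c) {w : Q} (hw : w ∈ range c) :
    ∃ i ≤ k, c i = w := by
  obtain ⟨i, rfl⟩ := hw
  rcases le_total i k with hik | hki
  · exact ⟨i, hik, rfl⟩
  · exact ⟨k, le_rfl, by rw [h.eq_of_le k le_rfl, h.eq_of_le i hki]⟩

lemma append (h₁ : IsEpsChain η S a b k₁ c₁) (h₂ : IsEpsChain η S b d k₂ c₂) :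
    ∃ c, IsEpsChain η S a d (k₁ + k₂) c ∧ range c₁ ∪ range c₂ ⊆ range c := by
  have hjoin : c₁ k₁ = c₂ 0 := by rw [h₁.eq_of_le k₁ le_rfl, h₂.zero]
  refine ⟨fun i ↦ if i ≤ k₁ then c₁ i else c₂ (i - k₁), ⟨by simp [h₁.zero], fun i hi ↦ ?_,
    fun i ↦ ?_, fun i ↦ ?_⟩, ?_⟩
  · split_ifs with hik
    · rw [show i = k₁ by omega, hjoin]
      exact h₂.eq_of_le 0 (by omega)
    · exact h₂.eq_of_le _ (by omega)
  · by_cases hi : i + 1 ≤ k₁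
    · simpa [hi, (Nat.le_succ i).trans hi] using h₁.dist_succ_lt i
    · by_cases hi' : i = k₁
      · subst hi'
        simpa [hjoin, Nat.add_sub_cancel_left] using h₂.dist_succ_lt 0
      · simpa [hi, show ¬ i ≤ k₁ by omega, show i + 1 - k₁ = i - k₁ + 1 by omega]
          using h₂.dist_succ_lt (i - k₁)
  · split_ifs
    exacts [h₁.mem i, h₂.mem _]
  · rintro _ (⟨i, rfl⟩ | ⟨i, rfl⟩)
    · obtain ⟨j, hj, hji⟩ := h₁.exists_le_eq_of_mem_range (mem_range_self i)
      exact ⟨j, by simp [hj, hji]⟩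
    · rcases Nat.eq_zero_or_pos i with rfl | hi
      · exact ⟨k₁, by simp [hjoin]⟩
      · exact ⟨k₁ + i, by simp [hi.ne']⟩

lemma reverse (h : IsEpsChain η S a b k c) : IsEpsChain η S b a k fun i ↦ c (k - i) where
  zero := by simpa using h.eq_of_le k le_rfl
  eq_of_le i hi := by simpa [Nat.sub_eq_zero_of_le hi] using h.zero
  dist_succ_lt i := by
    by_cases hi : i < k
    · rw [dist_comm, show k - i = k - (i + 1) + 1 by omega]
      exact h.dist_succ_lt _
    · simpa [Nat.sub_eq_zero_of_le (not_lt.1 hi), show k - (i + 1) = 0 by omega]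
        using dist_nonneg.trans_lt (h.dist_succ_lt 0)
  mem i := h.mem _

end IsEpsChain

theorem IsPreconnected.exists_isEpsChain {S : Set Q} (hS : IsPreconnected S) {a b : Q}
    (ha : a ∈ S) (hb : b ∈ S) {η : ℝ} (hη : 0 < η) : ∃ k c, IsEpsChain η S a b k c := by
  refine hS.induction₂ (fun x y ↦ ∃ k c, IsEpsChain η S x y k c) (fun x hx ↦ ?_)
    (fun x y z _ _ _ ⟨k₁, c₁, h₁⟩ ⟨k₂, c₂, h₂⟩ ↦ ?_)
    (fun x y _ _ ⟨k, c, h⟩ ↦ ⟨k, _, h.reverse⟩) ha hb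
  · filter_upwards [self_mem_nhdsWithin, nhdsWithin_le_nhds (ball_mem_nhds x hη)] with y hy hxy
    exact ⟨1, _, .pair hx hy (by rwa [dist_comm])⟩
  · obtain ⟨c, hc, -⟩ := h₁.append h₂
    exact ⟨_, c, hc⟩

theorem exists_isEpsChain_through {η : ℝ} {S : Set Q} {a b : Q} (W : Finset Q)
    (hW : ∀ w ∈ W, ∃ k c, IsEpsChain η S a w k c) (hb : ∃ k c, IsEpsChain η S a b k c) :
    ∃ k c, IsEpsChain η S a b k c ∧ ↑W ⊆ range c := by
  classical
  induction W using Finset.induction_on with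
  | empty =>
    obtain ⟨k, c, hc⟩ := hb
    exact ⟨k, c, hc, by simp⟩
  | insert w W _ ih =>
    obtain ⟨k, c, hc, hWc⟩ := ih fun w' hw' ↦ hW w' (Finset.mem_insert_of_mem hw')
    obtain ⟨k₁, c₁, h₁⟩ := hW w (Finset.mem_insert_self w W)
    obtain ⟨c₂, h₂, hr₂⟩ := h₁.append h₁.reverse
    obtain ⟨c₃, h₃, hr₃⟩ := h₂.append hc
    refine ⟨_, c₃, h₃, ?_⟩
    rw [Finset.coe_insert, insert_subset_iff]
    refine ⟨hr₃ (Or.inl (hr₂ (Or.inl ?_))), hWc.trans fun _ h ↦ hr₃ (Or.inr h)⟩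
    exact ⟨k₁, h₁.eq_of_le k₁ le_rfl⟩

theorem exists_forall_dist_lt_isEpsChain_closedBall [CompactSpace Q] [LocallyConnectedSpace Q]
    {ε : ℝ} (hε : 0 < ε) : ∃ δ > 0, δ ≤ ε ∧
      ∀ a b : Q, dist a b < δ → ∀ η > 0, ∃ k c, IsEpsChain η (closedBall a ε) a b k c := by
  have hV (x : Q) : ∃ V, (IsOpen V ∧ x ∈ V ∧ IsConnected V) ∧ V ⊆ ball x (ε / 2) :=
    (LocallyConnectedSpace.open_connected_basis x).mem_iff.1 (ball_mem_nhds x (half_pos hε))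
  choose V hV hVball using hV
  obtain ⟨δ, hδ, hleb⟩ := lebesgue_number_lemma_of_metric isCompact_univ (fun x ↦ (hV x).1)
    fun x _ ↦ mem_iUnion.2 ⟨x, (hV x).2.1⟩
  refine ⟨min δ ε, lt_min hδ hε, min_le_right _ _, fun a b hab η hη ↦ ?_⟩
  obtain ⟨x, hx⟩ := hleb a (mem_univ a)
  have ha : a ∈ V x := hx (mem_ball_self hδ)
  have hb : b ∈ V x := hx (mem_ball'.2 (hab.trans_le (min_le_left _ _)))
  obtain ⟨k, c, hc⟩ := (hV x).2.2.isPreconnected.exists_isEpsChain ha hb hη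
  refine ⟨k, c, hc.mono fun y hy ↦ ?_⟩
  have hyx := mem_ball.1 (hVball x hy)
  have hax := mem_ball.1 (hVball x ha)
  rw [mem_closedBall]
  linarith [dist_triangle_right y a x]

end EpsChain

section Refinement

variable {Q : Type*} [PseudoMetricSpace Q]

lemma Nat.mul_add_div_mod {M j r : ℕ} (hr : r < M) :
    (M * j + r) / M = j ∧ (M * j + r) % M = r :=
  ⟨by rw [Nat.mul_add_div (by omega), Nat.div_eq_of_lt hr, add_zero],
    by rw [Nat.mul_add_mod, Nat.mod_eq_of_lt hr]⟩

lemma dist_blocks_succ_lt {M : ℕ} (hM : 0 < M) {η : ℝ} {c : ℕ → ℕ → Q}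
    (hstep : ∀ j r, dist (c j r) (c j (r + 1)) < η) (hjoin : ∀ j, c j M = c (j + 1) 0) (i : ℕ) :
    dist (c (i / M) (i % M)) (c ((i + 1) / M) ((i + 1) % M)) < η := by
  obtain ⟨j, r, hr, rfl⟩ : ∃ j r, r < M ∧ i = M * j + r :=
    ⟨i / M, i % M, Nat.mod_lt i hM, (Nat.div_add_mod i M).symm⟩
  rw [(Nat.mul_add_div_mod hr).1, (Nat.mul_add_div_mod hr).2]
  rcases lt_or_eq_of_le (Nat.succ_le_of_lt hr) with hr' | hr'
  · rw [add_assoc, (Nat.mul_add_div_mod hr').1, (Nat.mul_add_div_mod hr').2]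
    exact hstep j r
  · rw [add_assoc, ← hr', ← Nat.mul_succ, Nat.mul_div_cancel_left _ (by omega),
      Nat.mul_mod_right, ← hjoin, ← hr']
    exact hstep j r

theorem exists_refinement [CompactSpace Q] {η δ B : ℝ} (hη : 0 < η) (hB : 0 ≤ B)
    (hchain : ∀ a b : Q, dist a b < δ → ∃ k c, IsEpsChain η (closedBall a B) a b k c)
    {N : ℕ} {v : ℕ → Q} (hmesh : ∀ i, dist (v i) (v (i + 1)) < δ)
    (htail : ∀ i, N ≤ i → v i = v N) (hdense : ∀ q, ∃ j < N, dist q (v j) < δ) :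
    ∃ M, ∃ v' : ℕ → Q, (∀ i, dist (v' i) (v' (i + 1)) < η) ∧
      (∀ i, N * M ≤ i → v' i = v' (N * M)) ∧ (∀ q, ∃ j < N * M, dist q (v' j) < η) ∧
      ∀ i, dist (v' i) (v (i / M)) ≤ B := by
  classical
  obtain ⟨T, -, hTfin, hT⟩ := finite_cover_balls_of_compact (isCompact_univ (X := Q)) hη
  have hseg (j : ℕ) : ∃ k c, IsEpsChain η (closedBall (v j) B) (v j) (v (j + 1)) k c ∧
      (N ≤ j → k = 0) ∧ (j < N → ∀ w ∈ T, dist w (v j) < δ → w ∈ range c) := by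
    by_cases hj : j < N
    · obtain ⟨k, c, hc, hWc⟩ := exists_isEpsChain_through
        (hTfin.toFinset.filter fun w ↦ dist w (v j) < δ)
        (fun w hw ↦ hchain _ _ (by rw [dist_comm]; exact (Finset.mem_filter.1 hw).2))
        (hchain _ _ (hmesh j))
      exact ⟨k, c, hc, by omega, fun _ w hw hwj ↦ hWc (by simpa [hw] using hwj)⟩
    · rw [htail (j + 1) (by omega), ← htail j (by omega)]
      exact ⟨0, _, .const hη (mem_closedBall_self hB), fun _ ↦ rfl, by omega⟩
  choose k c hc hk hcover using hseg
  set M := (Finset.range N).sup k + 1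
  have hkM (j : ℕ) : k j < M := by
    by_cases hj : j < N
    · exact Nat.lt_succ_of_le (Finset.le_sup (f := k) (Finset.mem_range.2 hj))
    · rw [hk j (not_lt.1 hj)]; omega
  have hMpos : 0 < M := Nat.succ_pos _
  have hv'tail (i : ℕ) (hi : N * M ≤ i) : c (i / M) (i % M) = v N := by
    have hNi : N ≤ i / M := (Nat.le_div_iff_mul_le hMpos).2 hi
    rw [(hc _).eq_of_le _ (by rw [hk _ hNi]; omega), htail _ (by omega)]
  refine ⟨M, fun i ↦ c (i / M) (i % M),
    dist_blocks_succ_lt hMpos (fun j ↦ (hc j).dist_succ_lt)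
      (fun j ↦ ((hc j).eq_of_le M (hkM j).le).trans (hc (j + 1)).zero.symm),
    fun i hi ↦ (hv'tail i hi).trans (hv'tail _ le_rfl).symm, fun q ↦ ?_,
    fun i ↦ by simpa [dist_comm] using (hc (i / M)).mem (i % M)⟩
  obtain ⟨w, hwT, hqw⟩ : ∃ w ∈ T, dist q w < η := by simpa using hT (mem_univ q)
  obtain ⟨j, hjN, hwj⟩ := hdense w
  obtain ⟨r, hr, hrw⟩ := (hc j).exists_le_eq_of_mem_range (hcover j hjN w hwT hwj)
  have hrM : r < M := hr.trans_lt (hkM j)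
  refine ⟨M * j + r, ?_, ?_⟩
  · nlinarith
  · simpa only [(Nat.mul_add_div_mod hrM).1, (Nat.mul_add_div_mod hrM).2, hrw] using hqw

end Refinement

section Limit

variable {Q : Type*} [PseudoMetricSpace Q]

lemma dist_natFloor_le {v : ℕ → Q} {e : ℝ} (hmesh : ∀ i, dist (v i) (v (i + 1)) ≤ e) {x y : ℝ}
    (hxy : |x - y| < 1) : dist (v ⌊x⌋₊) (v ⌊y⌋₊) ≤ e := by
  wlog hle : x ≤ y generalizing x y
  · rw [dist_comm]
    exact this (by rwa [abs_sub_comm]) (le_of_not_ge hle)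
  have hy : y < x + 1 := by linarith [le_abs_self (y - x), abs_sub_comm x y]
  have hfloor : ⌊y⌋₊ ≤ ⌊x⌋₊ + 1 := by
    rcases le_or_gt 0 x with hx | hx
    · exact (Nat.floor_le_floor hy.le).trans (Nat.floor_add_one hx).le
    · rw [Nat.floor_eq_zero.2 (by linarith), Nat.floor_of_nonpos hx.le]
      omega
  rcases (Nat.floor_le_floor hle).eq_or_lt with h | h
  · simpa [h] using dist_nonneg.trans (hmesh 0)
  · rw [show ⌊y⌋₊ = ⌊x⌋₊ + 1 by omega]
    exact hmesh _

/-- The limit is `f t = lim v n ⌊t * N n⌋₊`. -/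
theorem exists_continuous_dist_le_tsum_of_refining [CompleteSpace Q] {N M : ℕ → ℕ}
    (hN : ∀ n, 0 < N n) (hNM : ∀ n, N (n + 1) = N n * M n) {v : ℕ → ℕ → Q} {e : ℕ → ℝ}
    (he : Summable e)
    (hmesh : ∀ n i, dist (v n i) (v n (i + 1)) ≤ e n)
    (hrefine : ∀ n i, dist (v (n + 1) i) (v n (i / M n)) ≤ e n) :
    ∃ f : ℝ → Q, Continuous f ∧ ∀ n (j : ℕ), dist (v n j) (f (j / N n)) ≤ ∑' m, e (m + n) := by
  set u : ℝ → ℕ → Q := fun t n ↦ v n ⌊t * N n⌋₊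
  have hu (t : ℝ) (n : ℕ) : dist (u t n) (u t (n + 1)) ≤ e n := by
    have hM : (M n : ℝ) ≠ 0 := by
      have := hN (n + 1)
      rw [hNM] at this
      exact_mod_cast (Nat.pos_of_mul_pos_left this).ne'
    have hfloor : ⌊t * N (n + 1)⌋₊ / M n = ⌊t * N n⌋₊ := by
      rw [← Nat.floor_div_natCast, hNM, Nat.cast_mul, ← mul_assoc, mul_div_cancel_right₀ _ hM]
    simpa only [u, dist_comm, hfloor] using hrefine n ⌊t * N (n + 1)⌋₊
  have hlim (t : ℝ) : ∃ a, Tendsto (u t) atTop (𝓝 a) :=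
    cauchySeq_tendsto_of_complete (cauchySeq_of_dist_le_of_summable _ (hu t) he)
  choose f hf using hlim
  set τ : ℕ → ℝ := fun n ↦ ∑' m, e (m + n)
  have hτ (t : ℝ) (n : ℕ) : dist (u t n) (f t) ≤ τ n := by
    simpa only [τ, add_comm] using dist_le_tsum_of_dist_le_of_tendsto e (hu t) he (hf t) n
  refine ⟨f, Metric.continuous_iff.2 fun t ε hε ↦ ?_, fun n j ↦ ?_⟩
  · have hsmall : Tendsto (fun n ↦ τ n + e n + τ n) atTop (𝓝 0) := by
      simpa using ((tendsto_sum_nat_add e).add he.tendsto_atTop_zero).add (tendsto_sum_nat_add e)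
    obtain ⟨n, hn⟩ := (hsmall.eventually (gt_mem_nhds hε)).exists
    have hNn : (0 : ℝ) < N n := by exact_mod_cast hN n
    refine ⟨(N n)⁻¹, inv_pos.2 hNn, fun s hs ↦ ?_⟩
    have hfloor : |s * N n - t * N n| < 1 := by
      rw [← sub_mul, abs_mul, abs_of_pos hNn, ← lt_inv_mul_iff₀' hNn]
      rwa [mul_one, ← Real.dist_eq]
    calc dist (f s) (f t) ≤ dist (f s) (u s n) + dist (u s n) (u t n) + dist (u t n) (f t) :=
          dist_triangle4 _ _ _ _
      _ ≤ τ n + e n + τ n := by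
          gcongr
          · rw [dist_comm]; exact hτ s n
          · exact dist_natFloor_le (hmesh n) hfloor
          · exact hτ t n
      _ < ε := hn
  · have hgrid : u (j / N n) n = v n j := by
      have : (N n : ℝ) ≠ 0 := by exact_mod_cast (hN n).ne'
      simp only [u, div_mul_cancel₀ _ this, Nat.floor_natCast]
    simpa only [hgrid] using hτ (j / N n) n

end Limit

lemma exists_seq_of_forall_exists {α : Type*} {P : ℕ → α → Prop} {R : ℕ → α → α → Prop} {a : α}
    (ha : P 0 a) (h : ∀ n x, P n x → ∃ y, P (n + 1) y ∧ R n x y) :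
    ∃ s : ℕ → α, (∀ n, P n (s n)) ∧ ∀ n, R n (s n) (s (n + 1)) := by
  choose! g hg using h
  let s : ℕ → α := fun n ↦ Nat.rec a (fun n x ↦ g n x) n
  have hs (n : ℕ) : P n (s n) := by
    induction n with
    | zero => exact ha
    | succ n ih => exact (hg n _ ih).1
  exact ⟨s, hs, fun n ↦ (hg n _ (hs n)).2⟩

/-- The Hahn–Mazurkiewicz theorem. -/
theorem exists_continuous_surjective_unitInterval (Q : Type*) [MetricSpace Q] [CompactSpace Q]
    [ConnectedSpace Q] [LocallyConnectedSpace Q] :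
    ∃ g : unitInterval → Q, Continuous g ∧ Function.Surjective g := by
  obtain ⟨q₀⟩ := ConnectedSpace.toNonempty (α := Q)
  set ε : ℕ → ℝ := fun n ↦ (1 / 2) ^ n
  have hε (n : ℕ) : 0 < ε n := by positivity
  choose δ hδ hδε hchain using fun n ↦ exists_forall_dist_lt_isEpsChain_closedBall (Q := Q) (hε n)
  set Approx : ℕ → ℕ × (ℕ → Q) → Prop := fun n s ↦ (∀ i, dist (s.2 i) (s.2 (i + 1)) < δ n) ∧
    (∀ i, s.1 ≤ i → s.2 i = s.2 s.1) ∧ ∀ q, ∃ j < s.1, dist q (s.2 j) < δ n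
  -- level `0` refines the constant sequence at `q₀`, with `δ = diam Q + 1` and `B = diam Q`
  have hbase : ∃ s, Approx 0 s := by
    have hdiam (x y : Q) : dist x y ≤ diam (univ : Set Q) :=
      dist_le_diam_of_mem isCompact_univ.isBounded (mem_univ x) (mem_univ y)
    obtain ⟨M, v, hmesh, htail, hdense, -⟩ := exists_refinement (hδ 0) diam_nonneg
      (fun a b _ ↦ (isPreconnected_univ.exists_isEpsChain (mem_univ a) (mem_univ b) (hδ 0)).imp
        fun k ⟨c, hc⟩ ↦ ⟨c, hc.mono fun y _ ↦ mem_closedBall.2 (hdiam y a)⟩)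
      (N := 1) (v := fun _ ↦ q₀) (fun _ ↦ by rw [dist_self]; positivity) (fun _ _ ↦ rfl)
      (fun q ↦ ⟨0, one_pos, (hdiam q q₀).trans_lt (lt_add_one _)⟩)
    exact ⟨(1 * M, v), hmesh, htail, hdense⟩
  have hstep (n : ℕ) (s : ℕ × (ℕ → Q)) (hs : Approx n s) : ∃ s', Approx (n + 1) s' ∧
      ∃ M, s'.1 = s.1 * M ∧ ∀ i, dist (s'.2 i) (s.2 (i / M)) ≤ ε n := by
    obtain ⟨M, v, hmesh, htail, hdense, hclose⟩ := exists_refinement (hδ (n + 1)) (hε n).le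
      (fun a b hab ↦ hchain n a b hab _ (hδ (n + 1))) hs.1 hs.2.1 hs.2.2
    exact ⟨(s.1 * M, v), ⟨hmesh, htail, hdense⟩, M, rfl, hclose⟩
  obtain ⟨s₀, hs₀⟩ := hbase
  obtain ⟨s, hs, hlink⟩ := exists_seq_of_forall_exists hs₀ hstep
  choose M hNM hrefine using hlink
  have hN (n : ℕ) : 0 < (s n).1 := by
    obtain ⟨j, hj, -⟩ := (hs n).2.2 q₀
    omega
  obtain ⟨f, hf, hgrid⟩ := exists_continuous_dist_le_tsum_of_refining hN hNM
    summable_geometric_two (fun n i ↦ ((hs n).1 i).le.trans (hδε n)) hrefine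
  refine ⟨f ∘ Subtype.val, hf.comp continuous_subtype_val, fun q ↦ ?_⟩
  choose j hj hqj using fun n ↦ (hs n).2.2 q
  have ht (n : ℕ) : (j n : ℝ) / (s n).1 ∈ unitInterval :=
    ⟨by positivity, div_le_one_of_le₀ (by exact_mod_cast (hj n).le) (by positivity)⟩
  have htend : Tendsto (fun n ↦ f (j n / (s n).1)) atTop (𝓝 q) := by
    rw [tendsto_iff_dist_tendsto_zero]
    have hε0 : Tendsto ε atTop (𝓝 0) :=
      tendsto_pow_atTop_nhds_zero_of_lt_one (by norm_num) (by norm_num)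
    refine squeeze_zero (fun _ ↦ dist_nonneg) (fun n ↦ ?_)
      (by simpa only [add_zero] using hε0.add (tendsto_sum_nat_add ε))
    calc dist (f (j n / (s n).1)) q
        ≤ dist q ((s n).2 (j n)) + dist ((s n).2 (j n)) (f (j n / (s n).1)) := by
          rw [add_comm, dist_comm q]; exact dist_triangle_left _ _ _
      _ ≤ ε n + ∑' m, ε (m + n) := add_le_add ((hqj n).le.trans (hδε n)) (hgrid n (j n))
  have hclosed : IsClosed (range (f ∘ Subtype.val : unitInterval → Q)) :=
    (isCompact_range (hf.comp continuous_subtype_val)).isClosed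
  exact hclosed.mem_of_tendsto htend (Eventually.of_forall fun n ↦ ⟨⟨_, ht n⟩, rfl⟩)

theorem exists_continuous_surjective_unitInterval_eqOn_compl {X : Type*} [TopologicalSpace X]
    [NormalSpace X] [T1Space X] [PreconnectedSpace X] {U : Set X} (hU : IsOpen U) {u a : X}
    (hu : u ∈ U) (ha : a ∉ U) :
    ∃ p : X → unitInterval, Continuous p ∧ Function.Surjective p ∧ EqOn p 0 Uᶜ := by
  obtain ⟨f, hf0, hf1, hf01⟩ := exists_continuous_zero_one_of_isClosed hU.isClosed_compl
    isClosed_singleton (disjoint_singleton_right.2 (not_not.2 hu))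
  refine ⟨fun x ↦ ⟨f x, hf01 x⟩, f.continuous.subtype_mk _, fun t ↦ ?_,
    fun x hx ↦ Subtype.ext (hf0 hx)⟩
  have hIcc := intermediate_value_univ a u f.continuous
  rw [hf0 ha, hf1 rfl] at hIcc
  obtain ⟨x, hx⟩ := hIcc t.2
  exact ⟨x, Subtype.ext hx⟩

theorem IsPeanoOn.exists_continuous_range_eq {X : Type*} [MetricSpace X] {S : Set X}
    (hS : IsPeanoOn S) : ∃ g : unitInterval → X, Continuous g ∧ range g = S := by
  have := isCompact_iff_compactSpace.1 hS.1
  have := Subtype.connectedSpace hS.2.1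
  have := hS.2.2
  obtain ⟨g, hg, hsurj⟩ := exists_continuous_surjective_unitInterval S
  exact ⟨Subtype.val ∘ g, continuous_subtype_val.comp hg,
    by rw [range_comp, hsurj.range_eq, image_univ, Subtype.range_coe]⟩

theorem IsPeanoOn.exists_continuous_range_eq_subsingleton_image {X : Type*} [MetricSpace X]
    [PreconnectedSpace X] {S U : Set X} (hS : IsPeanoOn S) (hU : IsOpen U) (hUne : U.Nonempty)
    (hUc : Uᶜ.Nonempty) : ∃ φ : X → X, Continuous φ ∧ range φ = S ∧ (φ '' Uᶜ).Subsingleton := by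
  obtain ⟨p, hp, hpsurj, hp0⟩ :=
    exists_continuous_surjective_unitInterval_eqOn_compl hU hUne.some_mem hUc.some_mem
  obtain ⟨γ, hγ, hγS⟩ := hS.exists_continuous_range_eq
  refine ⟨γ ∘ p, hγ.comp hp, by rw [hpsurj.range_comp, hγS], ?_⟩
  rintro _ ⟨x, hx, rfl⟩ _ ⟨y, hy, rfl⟩
  simp [hp0 hx, hp0 hy]

lemma IsOpen.inter_of_compl_subset {X : Type*} [TopologicalSpace X] {A V C : Set X}
    (hV : IsOpen V) (hC : IsClosed C) (hAC : Aᶜ ⊆ C) (hCAV : C ⊆ (A ∩ V)ᶜ) : IsOpen (A ∩ V) := by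
  convert hV.inter hC.isOpen_compl using 1
  ext x
  refine ⟨fun hx ↦ ⟨hx.2, fun hxC ↦ hCAV hxC hx⟩, fun ⟨hxV, hxC⟩ ↦ ⟨?_, hxV⟩⟩
  exact not_not.1 fun hxA ↦ hxC (hAC hxA)

theorem exists_continuous_extension_const_compl {X Y : Type*} [TopologicalSpace X]
    [TopologicalSpace Y] {A U : Set X} {f : X → Y} {c : Y} (hA : IsClosed A) (hU : IsOpen U)
    (hUA : U ⊆ A) (hAU : (A \ U).Nonempty) (hf : ContinuousOn f A) (hc : ∀ x ∈ A \ U, f x = c) :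
    ∃ g : X → Y, Continuous g ∧ EqOn g f A ∧ range g ⊆ f '' A ∧ (g '' Uᶜ).Subsingleton := by
  classical
  obtain ⟨a, ha⟩ := hAU
  have hgA : EqOn (A.piecewise f fun _ ↦ c) f A := piecewise_eqOn _ _ _
  have hgU : EqOn (A.piecewise f fun _ ↦ c) (fun _ ↦ c) Uᶜ := fun x hx ↦ by
    by_cases hxA : x ∈ A
    · rw [hgA hxA, hc x ⟨hxA, hx⟩]
    · exact piecewise_eq_of_notMem _ _ _ hxA
  have hcover : A ∪ Uᶜ = univ := eq_univ_of_forall fun x ↦ (em (x ∈ U)).imp (@hUA x) id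
  refine ⟨_, ?_, hgA, ?_, ?_⟩
  · rw [← continuousOn_univ, ← hcover]
    exact (hf.congr hgA).union_of_isClosed (continuousOn_const.congr hgU) hA hU.isClosed_compl
  · rintro _ ⟨x, rfl⟩
    by_cases hxA : x ∈ A
    · exact ⟨x, hxA, (hgA hxA).symm⟩
    · exact ⟨a, ha.1, by rw [hc a ha, hgU fun hxU ↦ hxA (hUA hxU)]⟩
  · rintro _ ⟨x, hx, rfl⟩ _ ⟨y, hy, rfl⟩
    rw [hgU hx, hgU hy]

section Words

variable {X : Type*}

@[simp] lemma comp_nil_apply (x : X) : Comp [] x = x := rfl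

@[simp] lemma comp_cons_apply (f : X → X) (l : List (X → X)) (x : X) :
    Comp (f :: l) x = f (Comp l x) := rfl

@[simp] lemma comp_append_apply (l₁ l₂ : List (X → X)) (x : X) :
    Comp (l₁ ++ l₂) x = Comp l₁ (Comp l₂ x) := by
  induction l₁ <;> simp [*]

lemma mapsTo_comp {A : Set X} {l : List (X → X)} (hl : ∀ f ∈ l, MapsTo f A A) :
    MapsTo (Comp l) A A := by
  induction l with
  | nil => exact mapsTo_id A
  | cons f l ih =>
    exact (hl f (by simp)).comp (ih fun g hg ↦ hl g (by simp [hg]))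

lemma exists_comp_eqOn {F : Set (X → X)} {A : Set X} (hFA : ∀ f ∈ F, MapsTo f A A)
    {l : List (X → X)} (hl : ∀ g ∈ l, ∃ f ∈ F, EqOn g f A) :
    ∃ fs : List (X → X), fs.length = l.length ∧ (∀ f ∈ fs, f ∈ F) ∧
      EqOn (Comp l) (Comp fs) A := by
  induction l with
  | nil => exact ⟨[], rfl, by simp, fun _ _ ↦ rfl⟩
  | cons g l ih =>
    obtain ⟨f, hf, hgf⟩ := hl g (by simp)
    obtain ⟨fs, hlen, hfs, hEq⟩ := ih fun g' hg' ↦ hl g' (by simp [hg'])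
    refine ⟨f :: fs, by simp [hlen], by simpa [hf] using hfs, fun x hx ↦ ?_⟩
    rw [comp_cons_apply, comp_cons_apply, hEq hx]
    exact hgf (mapsTo_comp (fun f' hf' ↦ hFA f' (hfs f' hf')) hx)

lemma List.exists_pair_infix_cons {α : Type*} {l : List α} {x : α} (b : α) (hx : x ∈ l) :
    ∃ a, [a, x] <:+: b :: l := by
  induction l generalizing b with
  | nil => simp at hx
  | cons y l ih =>
    rcases List.mem_cons.1 hx with rfl | hx
    · exact ⟨b, (List.prefix_append [b, x] l).isInfix⟩
    · obtain ⟨a, ha⟩ := ih y hx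
      exact ⟨a, List.infix_cons ha⟩

lemma comp_apply_eq_of_infix {l : List (X → X)} {g h : X → X} (hgh : [g, h] <:+: l)
    (hc : ∀ x y, g (h x) = g (h y)) (x y : X) : Comp l x = Comp l y := by
  obtain ⟨s, t, rfl⟩ := hgh
  simp [hc (Comp t x) (Comp t y)]

end Words

theorem TopContracting.univ_of_extend_or_collapse {X : Type*} [MetricSpace X] [CompactSpace X]
    [Nonempty X] {F G : Set (X → X)} {A K : Set X} (hF : TopContracting F A)
    (hFA : ∀ f ∈ F, MapsTo f A A)
    (hGfin : G.Finite) (hGcont : ∀ g ∈ G, Continuous g)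
    (hGK : ∀ g ∈ G, (g '' K).Subsingleton)
    (hG : ∀ g ∈ G, (range g ⊆ A ∧ ∃ f ∈ F, EqOn g f A) ∨ range g ⊆ K) :
    TopContracting G univ := by
  intro 𝒰 h𝒰 hcover
  obtain ⟨r, hr, hleb⟩ := lebesgue_number_lemma_of_metric_sUnion isCompact_univ h𝒰 hcover
  have : Finite G := hGfin.to_subtype
  obtain ⟨d, hd, hequi⟩ := Metric.uniformEquicontinuous_iff.1 (uniformEquicontinuous_finite.2
    fun g : G ↦ CompactSpace.uniformContinuous_of_continuous (hGcont g g.2)) r hr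
  obtain ⟨N, hN⟩ := hF (range fun x ↦ ball x d) (by rintro _ ⟨x, rfl⟩; exact isOpen_ball)
    fun x _ ↦ mem_sUnion.2 ⟨_, ⟨x, rfl⟩, mem_ball_self hd⟩
  refine ⟨N + 2, fun l hl hlG ↦ ?_⟩
  obtain ⟨g₀, t, h, rfl⟩ : ∃ g₀ t h, l = g₀ :: (t ++ [h]) := by
    obtain _ | ⟨g₀, l⟩ := l
    · simp at hl
    · obtain rfl | ⟨t, h, rfl⟩ := l.eq_nil_or_concat
      · simp at hl
      · exact ⟨g₀, t, h, by simp⟩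
  by_cases hK : ∃ g ∈ t ++ [h], range g ⊆ K
  · -- a letter sending everything into `K` follows another letter, so the word is constant
    obtain ⟨g, hg, hgK⟩ := hK
    obtain ⟨a, ha⟩ := List.exists_pair_infix_cons g₀ hg
    have hconst := comp_apply_eq_of_infix ha fun x y ↦ hGK a (hlG a (ha.subset (by simp)))
      (mem_image_of_mem a (hgK ⟨x, rfl⟩)) (mem_image_of_mem a (hgK ⟨y, rfl⟩))
    obtain ⟨x₀⟩ := ‹Nonempty X›
    obtain ⟨V, hV, hxV⟩ := mem_sUnion.1 (hcover (mem_univ (Comp _ x₀)))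
    exact ⟨V, hV, by rintro _ ⟨x, -, rfl⟩; rwa [hconst x x₀]⟩
  · push Not at hK
    have hA (g : X → X) (hg : g ∈ t ++ [h]) : range g ⊆ A ∧ ∃ f ∈ F, EqOn g f A :=
      (hG g (hlG g (by simp [hg]))).resolve_right (hK g hg)
    obtain ⟨fs, hlen, hfsF, hEq⟩ :=
      exists_comp_eqOn hFA (l := t) fun g hg ↦ (hA g (by simp [hg])).2
    obtain ⟨_, ⟨x₁, rfl⟩, hball⟩ := hN fs (by simp at hl; omega) hfsF
    obtain ⟨V, hV, hballV⟩ := hleb (g₀ x₁) (mem_univ _)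
    refine ⟨V, hV, ?_⟩
    rintro _ ⟨x, -, rfl⟩
    have hhx : h x ∈ A := (hA h (by simp)).1 ⟨x, rfl⟩
    have hclose : dist (Comp t (h x)) x₁ < d := hball ⟨h x, hhx, (hEq hhx).symm⟩
    apply hballV
    simpa using hequi _ _ hclose ⟨g₀, hlG g₀ (by simp)⟩

theorem topFractal_image_union_range {X ι : Type*} [MetricSpace X] [CompactSpace X] [Nonempty X]
    [Finite ι] {F : Set (X → X)} {A K : Set X} (hF : TopFractalOn F A) {E : (X → X) → X → X}
    (hE : ∀ f ∈ F, Continuous (E f)) (hEf : ∀ f ∈ F, EqOn (E f) f A)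
    (hEA : ∀ f ∈ F, range (E f) ⊆ A) (hEK : ∀ f ∈ F, (E f '' K).Subsingleton) {φ : ι → X → X}
    (hφ : ∀ i, Continuous (φ i)) (hφK : ∀ i, range (φ i) ⊆ K)
    (hφK' : ∀ i, (φ i '' K).Subsingleton) (hAφ : Aᶜ ⊆ ⋃ i, range (φ i)) :
    TopFractal (E '' F ∪ range φ) := by
  obtain ⟨-, hFfin, hFmaps, hFunion, hFcontr⟩ := hF
  have hGfin : (E '' F ∪ range φ).Finite := (hFfin.image E).union (finite_range φ)
  have hGcont : ∀ g ∈ E '' F ∪ range φ, Continuous g := by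
    rintro _ (⟨f, hf, rfl⟩ | ⟨i, rfl⟩)
    exacts [hE f hf, hφ i]
  refine ⟨hGfin, hGcont, ?_, hFcontr.univ_of_extend_or_collapse
    (fun f hf ↦ mapsTo_iff_image_subset.2 (hFmaps f hf).2) hGfin hGcont (K := K) ?_ ?_⟩
  · refine eq_univ_of_forall fun x ↦ mem_iUnion₂.2 ?_
    by_cases hx : x ∈ A
    · obtain ⟨f, hf, y, hy, rfl⟩ := mem_iUnion₂.1 (hFunion.symm ▸ hx)
      exact ⟨E f, .inl (mem_image_of_mem E hf), y, hEf f hf hy⟩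
    · obtain ⟨i, hi⟩ := mem_iUnion.1 (hAφ hx)
      exact ⟨φ i, .inr ⟨i, rfl⟩, hi⟩
  · rintro _ (⟨f, hf, rfl⟩ | ⟨i, rfl⟩)
    exacts [hEK f hf, hφK' i]
  · rintro _ (⟨f, hf, rfl⟩ | ⟨i, rfl⟩)
    exacts [.inl ⟨hEA f hf, f, hf, hEf f hf⟩, .inr (hφK i)]

theorem stmt13_general {X : Type*} [MetricSpace X] [CompactSpace X] [ConnectedSpace X]
    (A U : Set X) (F : Set (X → X))
    (hAF : TopFractalOn F A)
    (hUA : U ⊆ A) (hUne : U.Nonempty) (hUneq : U ≠ A)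
    (hUopen : ∃ V : Set X, IsOpen V ∧ U = A ∩ V)
    (hconst : ∀ f ∈ F, ∃ c : X, ∀ x ∈ A \ U, f x = c)
    (hP : ∃ (n : ℕ) (P : Fin n → Set X), (∀ i, IsPeanoOn (P i)) ∧
      Set.univ \ A ⊆ (⋃ i, P i) ∧ (⋃ i, P i) ⊆ Set.univ \ U) :
    ∃ G : Set (X → X), TopFractal G := by
  have ⟨hAcomp, _, hFmaps, _⟩ := hAF
  obtain ⟨V, hV, rfl⟩ := hUopen
  obtain ⟨n, P, hPeano, hAP, hPU⟩ := hP
  have hAU : (A \ (A ∩ V)).Nonempty := sdiff_nonempty.2 fun h ↦ hUneq (hUA.antisymm h)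
  have hU : IsOpen (A ∩ V) := hV.inter_of_compl_subset
    (isCompact_iUnion fun i ↦ (hPeano i).1).isClosed (by rwa [compl_eq_univ_sdiff])
    (by rwa [compl_eq_univ_sdiff])
  choose φ hφ hφP hφU using fun i ↦ (hPeano i).exists_continuous_range_eq_subsingleton_image hU
    hUne (hAU.mono fun x hx ↦ hx.2)
  choose! E hE hEf hEA hEU using fun f hf ↦ (hconst f hf).elim fun _ hc ↦
    exists_continuous_extension_const_compl hAcomp.isClosed hU hUA hAU (hFmaps f hf).1 hc
  refine ⟨_, topFractal_image_union_range hAF hE hEf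
    (fun f hf ↦ (hEA f hf).trans (hFmaps f hf).2) hEU hφ (fun i ↦ ?_) hφU ?_⟩
  · rw [hφP i]
    exact fun x hx ↦ (hPU (mem_iUnion.2 ⟨i, hx⟩)).2
  · simpa only [hφP, compl_eq_univ_sdiff] using hAP

theorem stmt13 {X : Type*} [MetricSpace X] [CompactSpace X] [ConnectedSpace X]
    [LocallyConnectedSpace X] (A U : Set X) (F : Set (X → X))
    (hAF : TopFractalOn F A)
    (hUA : U ⊆ A) (hUne : U.Nonempty) (hUneq : U ≠ A)
    (hUopen : ∃ V : Set X, IsOpen V ∧ U = A ∩ V)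
    (hconst : ∀ f ∈ F, ∃ c : X, ∀ x ∈ A \ U, f x = c)
    (hP : ∃ (n : ℕ) (P : Fin n → Set X), (∀ i, IsPeanoOn (P i)) ∧
      Set.univ \ A ⊆ (⋃ i, P i) ∧ (⋃ i, P i) ⊆ Set.univ \ U) :
    ∃ G : Set (X → X), TopFractal G :=
  stmt13_general A U F hAF hUA hUne hUneq hUopen hconst hP
end

section
/- The space X = [0,1] ∪ {2} (with the subspace metric from ℝ) is the underlying space of a topological fractal satisfying the Open Set Condition, but X is not a self regenerating fractal: for the open set U = {2}, no finite family of continuous self-maps of X constant on X \ U makes X a topological fractal. -/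
open Set

/-! The fractal structure on `[0,1] ∪ {2}` is given by the halving maps `x ↦ x/2` and
`x ↦ 1 - x/2` of `[0,1]`, extended to `2` by folding `2` back onto `1/2`, together with the
constant map `2`. All three maps are `1/2`-Lipschitz on a compact space, hence form a
topological fractal, and they push the open set `X \ {0, 1}` into the pairwise disjoint
pieces `(0, 1/2)`, `(1/2, 1)` and `{2}`. On the other hand a map that is constant off the
point `2` has at most two values, so finitely many of them cannot cover the infinite space. -/

open NNReal

def OpenSetCondition {X : Type*} [TopologicalSpace X] (F : Set (X → X)) : Prop :=
  ∃ V : Set X, IsOpen V ∧ (F.Pairwise fun f g => Disjoint (f '' V) (g '' V)) ∧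
    (⋃ f ∈ F, f '' V) ⊆ V

section Lipschitz

variable {X : Type*}

theorem LipschitzWith.comp_list [PseudoEMetricSpace X] {K : ℝ≥0} :
    ∀ l : List (X → X), (∀ f ∈ l, LipschitzWith K f) → LipschitzWith (K ^ l.length) (Comp l)
  | [], _ => by simpa [Comp] using LipschitzWith.id
  | f :: l, hl => by
    rw [List.length_cons, pow_succ']
    exact (hl f List.mem_cons_self).comp
      (LipschitzWith.comp_list l fun g hg => hl g (List.mem_cons_of_mem f hg))

theorem topContracting_univ_of_lipschitzWith [PseudoMetricSpace X] [CompactSpace X] [Nonempty X]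
    {F : Set (X → X)} {K : ℝ≥0} (hK : K < 1) (hF : ∀ f ∈ F, LipschitzWith K f) :
    TopContracting F univ := by
  intro 𝒰 h𝒰 hcover
  obtain ⟨δ, hδ, hball⟩ := lebesgue_number_lemma_of_metric_sUnion isCompact_univ h𝒰 hcover
  set D := Metric.diam (univ : Set X)
  have hsmall : ∀ᶠ n : ℕ in Filter.atTop, (K : ℝ) ^ n * D < δ := by
    have := (_root_.tendsto_pow_atTop_nhds_zero_of_lt_one K.2 hK).mul_const D
    rw [zero_mul] at this
    exact this.eventually (gt_mem_nhds hδ)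
  obtain ⟨n, hn⟩ := hsmall.exists
  refine ⟨n, fun l hlen hl => ?_⟩
  have hlip : LipschitzWith (K ^ n) (Comp l) :=
    hlen ▸ LipschitzWith.comp_list l fun f hf => hF f (hl f hf)
  obtain ⟨x₀⟩ := ‹Nonempty X›
  obtain ⟨U, hU, hsub⟩ := hball (Comp l x₀) (mem_univ _)
  refine ⟨U, hU, ?_⟩
  rintro _ ⟨x, -, rfl⟩
  apply hsub
  calc dist (Comp l x) (Comp l x₀) ≤ K ^ n * dist x x₀ := by
        simpa using hlip.dist_le_mul x x₀
    _ ≤ K ^ n * D := by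
        gcongr
        exact Metric.dist_le_diam_of_mem isCompact_univ.isBounded (mem_univ _) (mem_univ _)
    _ < δ := hn

theorem topFractal_of_lipschitzWith [PseudoMetricSpace X] [CompactSpace X] [Nonempty X]
    {F : Set (X → X)} {K : ℝ≥0} (hK : K < 1) (hfin : F.Finite)
    (hF : ∀ f ∈ F, LipschitzWith K f) (hcover : ⋃ f ∈ F, range f = univ) : TopFractal F :=
  ⟨hfin, fun f hf => (hF f hf).continuous, hcover, topContracting_univ_of_lipschitzWith hK hF⟩

end Lipschitz

theorem TopFractal.exists_infinite_range {X : Type*} [TopologicalSpace X] [Infinite X]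
    {F : Set (X → X)} (h : TopFractal F) : ∃ f ∈ F, (range f).Infinite := by
  by_contra! hfin
  have : (⋃ f ∈ F, range f).Finite := h.1.biUnion hfin
  rw [h.2.2.1] at this
  exact infinite_univ this

theorem Set.Finite.range_of_eqOn_compl {α β : Type*} {f : α → β} {s : Set α} (hs : s.Finite)
    {c : β} (hc : EqOn f (fun _ => c) sᶜ) : (range f).Finite := by
  refine ((hs.image f).insert c).subset ?_
  rintro _ ⟨x, rfl⟩
  by_cases hx : x ∈ s
  · exact mem_insert_of_mem _ (mem_image_of_mem f hx)
  · exact hc hx ▸ mem_insert _ _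

abbrev IccWithTwo : Set ℝ := Icc 0 1 ∪ {2}

namespace IccWithTwo

noncomputable section

instance : CompactSpace IccWithTwo :=
  isCompact_iff_compactSpace.mp (isCompact_Icc.union isCompact_singleton)

instance : Infinite IccWithTwo :=
  ((Icc_infinite zero_lt_one).mono subset_union_left).to_subtype

def two : IccWithTwo := ⟨2, Or.inr rfl⟩

instance : Nonempty IccWithTwo := ⟨two⟩

def fold (x : ℝ) : ℝ := min x (5 / 2 - x)

theorem fold_of_le_one {x : ℝ} (hx : x ≤ 1) : fold x = x := min_eq_left (by linarith)

theorem lipschitzWith_fold : LipschitzWith 1 fold := by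
  unfold fold
  simpa using LipschitzWith.id.min ((LipschitzWith.const (5 / 2 : ℝ)).sub LipschitzWith.id)

theorem abs_fold_sub_fold_le (x y : IccWithTwo) : |fold x - fold y| ≤ |(x : ℝ) - y| := by
  simpa [← Real.dist_eq] using lipschitzWith_fold.dist_le_mul x y

theorem fold_mem_Icc (x : IccWithTwo) : fold x ∈ Icc 0 1 := by
  rcases x with ⟨x, hx | rfl⟩
  · rwa [fold_of_le_one hx.2]
  · norm_num [fold]

theorem fold_mem_Ioo {x : IccWithTwo} (hx : (x : ℝ) ∉ ({0, 1} : Set ℝ)) : fold x ∈ Ioo 0 1 := by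
  rcases x with ⟨x, hx' | rfl⟩
  · simp only [mem_insert_iff, mem_singleton_iff, not_or] at hx
    rw [fold_of_le_one hx'.2]
    exact ⟨lt_of_le_of_ne hx'.1 (Ne.symm hx.1), lt_of_le_of_ne hx'.2 hx.2⟩
  · norm_num [fold]

def lowerHalf (x : IccWithTwo) : IccWithTwo :=
  ⟨fold x / 2, Or.inl ⟨by linarith [(fold_mem_Icc x).1], by linarith [(fold_mem_Icc x).2]⟩⟩

def upperHalf (x : IccWithTwo) : IccWithTwo :=
  ⟨1 - fold x / 2, Or.inl ⟨by linarith [(fold_mem_Icc x).2], by linarith [(fold_mem_Icc x).1]⟩⟩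

def halvingFamily : Set (IccWithTwo → IccWithTwo) := {lowerHalf, upperHalf, fun _ => two}

theorem lipschitzWith_lowerHalf : LipschitzWith 2⁻¹ lowerHalf := by
  refine LipschitzWith.of_dist_le_mul fun x y => ?_
  obtain ⟨h₁, h₂⟩ := abs_le.mp (abs_fold_sub_fold_le x y)
  simp only [Subtype.dist_eq, lowerHalf, Real.dist_eq, NNReal.coe_inv, NNReal.coe_ofNat]
  rw [abs_le]
  constructor <;> linarith

theorem lipschitzWith_upperHalf : LipschitzWith 2⁻¹ upperHalf := by
  refine LipschitzWith.of_dist_le_mul fun x y => ?_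
  obtain ⟨h₁, h₂⟩ := abs_le.mp (abs_fold_sub_fold_le x y)
  simp only [Subtype.dist_eq, upperHalf, Real.dist_eq, NNReal.coe_inv, NNReal.coe_ofNat]
  rw [abs_le]
  constructor <;> linarith

theorem iUnion_range_halvingFamily : ⋃ f ∈ halvingFamily, range f = univ := by
  refine eq_univ_of_forall fun x => mem_iUnion₂.mpr ?_
  rcases x with ⟨x, ⟨hx₀, hx₁⟩ | rfl⟩
  · rcases le_total x (1 / 2) with hx | hx
    · refine ⟨lowerHalf, Or.inl rfl, ⟨2 * x, Or.inl ⟨by linarith, by linarith⟩⟩, ?_⟩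
      ext
      simp only [lowerHalf, fold_of_le_one (by linarith : 2 * x ≤ 1)]
      ring
    · refine ⟨upperHalf, Or.inr (Or.inl rfl), ⟨2 - 2 * x, Or.inl ⟨by linarith, by linarith⟩⟩, ?_⟩
      ext
      simp only [upperHalf, fold_of_le_one (by linarith : 2 - 2 * x ≤ 1)]
      ring
  · exact ⟨fun _ => two, Or.inr (Or.inr rfl), two, rfl⟩

theorem topFractal_halvingFamily : TopFractal halvingFamily := by
  refine topFractal_of_lipschitzWith (K := 2⁻¹) (by norm_num)
    (((finite_singleton _).insert _).insert _) ?_ iUnion_range_halvingFamily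
  rintro f (rfl | rfl | rfl)
  exacts [lipschitzWith_lowerHalf, lipschitzWith_upperHalf, (LipschitzWith.const _).weaken bot_le]

theorem mapsTo_lowerHalf :
    MapsTo lowerHalf (Subtype.val ⁻¹' {0, 1}ᶜ) (Subtype.val ⁻¹' Ioo 0 (1 / 2)) := fun x hx => by
  obtain ⟨h₀, h₁⟩ := fold_mem_Ioo hx
  show fold x / 2 ∈ Ioo 0 (1 / 2)
  constructor <;> linarith

theorem mapsTo_upperHalf :
    MapsTo upperHalf (Subtype.val ⁻¹' {0, 1}ᶜ) (Subtype.val ⁻¹' Ioo (1 / 2) 1) := fun x hx => by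
  obtain ⟨h₀, h₁⟩ := fold_mem_Ioo hx
  show 1 - fold x / 2 ∈ Ioo (1 / 2) 1
  constructor <;> linarith

theorem openSetCondition_halvingFamily : OpenSetCondition halvingFamily := by
  set V : Set IccWithTwo := Subtype.val ⁻¹' {0, 1}ᶜ
  have hV : IsOpen V :=
    (toFinite ({0, 1} : Set ℝ)).isClosed.isOpen_compl.preimage continuous_subtype_val
  have hlow := mapsTo_lowerHalf.image_subset
  have hupp := mapsTo_upperHalf.image_subset
  have htwo : (fun _ => two) '' V ⊆ Subtype.val ⁻¹' {2} := by
    rintro _ ⟨_, -, rfl⟩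
    rfl
  have d₁₂ : Disjoint (lowerHalf '' V) (upperHalf '' V) :=
    ((Ioo_disjoint_Ioo.mpr (by norm_num)).preimage _).mono hlow hupp
  have d₁₃ : Disjoint (lowerHalf '' V) ((fun _ => two) '' V) :=
    ((disjoint_singleton_right.mpr (by norm_num)).preimage _).mono hlow htwo
  have d₂₃ : Disjoint (upperHalf '' V) ((fun _ => two) '' V) :=
    ((disjoint_singleton_right.mpr (by norm_num)).preimage _).mono hupp htwo
  refine ⟨V, hV, ?_, iUnion₂_subset ?_⟩
  · rintro f (rfl | rfl | rfl) g (rfl | rfl | rfl) hne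
    all_goals first | exact absurd rfl hne | skip
    exacts [d₁₂, d₁₃, d₁₂.symm, d₂₃, d₁₃.symm, d₂₃.symm]
  · rintro f (rfl | rfl | rfl)
    · refine hlow.trans (preimage_mono fun x hx h => ?_)
      rcases h with rfl | rfl <;> norm_num at hx
    · refine hupp.trans (preimage_mono fun x hx h => ?_)
      rcases h with rfl | rfl <;> norm_num at hx
    · exact htwo.trans (preimage_mono (by norm_num))

theorem finite_range_of_eqOn_ne_two {f : IccWithTwo → IccWithTwo} {c : IccWithTwo}
    (hc : ∀ x : IccWithTwo, (x : ℝ) ≠ 2 → f x = c) : (range f).Finite :=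
  ((finite_singleton (2 : ℝ)).preimage Subtype.val_injective.injOn).range_of_eqOn_compl hc

end

end IccWithTwo

open IccWithTwo in
theorem stmt19 :
    (∃ F : Set ((Set.Icc (0:ℝ) 1 ∪ {2} : Set ℝ) → (Set.Icc (0:ℝ) 1 ∪ {2} : Set ℝ)),
      TopFractal F ∧
      ∃ V : Set (Set.Icc (0:ℝ) 1 ∪ {2} : Set ℝ), IsOpen V ∧
        (F.Pairwise fun f g => Disjoint (f '' V) (g '' V)) ∧
        (⋃ f ∈ F, f '' V) ⊆ V) ∧
    ¬ ∃ F : Set ((Set.Icc (0:ℝ) 1 ∪ {2} : Set ℝ) → (Set.Icc (0:ℝ) 1 ∪ {2} : Set ℝ)),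
        (∀ f ∈ F, ∃ c, ∀ x : (Set.Icc (0:ℝ) 1 ∪ {2} : Set ℝ), (x : ℝ) ≠ 2 → f x = c) ∧ TopFractal F := by
  refine ⟨⟨halvingFamily, topFractal_halvingFamily, openSetCondition_halvingFamily⟩, ?_⟩
  rintro ⟨F, hconst, hF⟩
  obtain ⟨f, hf, hinf⟩ := hF.exists_infinite_range
  obtain ⟨c, hc⟩ := hconst f hf
  exact hinf (finite_range_of_eqOn_ne_two hc)
end
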